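/- Let f : ℝ → ℝ be smooth with f'(±1) = 0 and f''(±1) > 0, and let θ₀ solve -θ₀'' + f'(θ₀) = 0 with θ₀(ρ) → ±1 as ρ → ±∞ and -1 < θ₀ < 1. Then for every α' with 0 < α' < α := min(√(f''(-1)), √(f''(1))) there is a constant C > 0 such that |θ₀(ρ) - 1| ≤ C e^{-α' ρ} for all ρ ≥ 0 and |θ₀(ρ) + 1| ≤ C e^{α' ρ} for all ρ ≤ 0. -/

import Mathlib

open Filter Topology Real Set

set_option maxHeartbeats 1000000

private lemma expMulDeriv (b ρ : ℝ) :
    HasDerivAt (fun ρ : ℝ => Real.exp (b * ρ)) (Real.exp (b * ρ) * b) ρ := by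
  simpa using ((hasDerivAt_id ρ).const_mul b).exp

private lemma expMulInv (b ρ : ℝ) : Real.exp (-b * ρ) * Real.exp (b * ρ) = 1 := by
  rw [← Real.exp_add]; ring_nf; exact Real.exp_zero

lemma right_decay (f θ₀ : ℝ → ℝ)
    (hf : ContDiff ℝ (⊤ : ℕ∞) f) (hf'1 : deriv f 1 = 0)
    (hθ : ContDiff ℝ 2 θ₀)
    (hode : ∀ ρ, -(deriv (deriv θ₀) ρ) + deriv f (θ₀ ρ) = 0)
    (htop : Filter.Tendsto θ₀ Filter.atTop (nhds 1))
    (hrange : ∀ ρ, θ₀ ρ ∈ Set.Ioo (-1 : ℝ) 1)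
    (α' : ℝ) (hα'pos : 0 < α') (hA : α' ^ 2 < iteratedDeriv 2 f 1) :
    ∃ C > 0, ∀ ρ : ℝ, 0 ≤ ρ → |θ₀ ρ - 1| ≤ C * Real.exp (-α' * ρ) := by
  -- differentiability facts
  have hθ1 : Differentiable ℝ θ₀ := hθ.differentiable (by norm_num)
  have hθ'd : Differentiable ℝ (deriv θ₀) := by
    have h2 : ContDiff ℝ (1 + 1 : WithTop ℕ∞) θ₀ := by norm_num at hθ ⊢; exact hθ
    exact ((contDiff_succ_iff_deriv.mp h2).2.2).differentiable (by norm_num)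
  have hθc : Continuous θ₀ := hθ1.continuous
  have hθ'c : Continuous (deriv θ₀) := hθ'd.continuous
  have hfi : ContDiff ℝ (⊤ : ℕ∞) f := hf.of_le (by simp)
  have hf'c : ContDiff ℝ (⊤ : ℕ∞) (deriv f) := (contDiff_infty_iff_deriv.mp hfi).2
  have hode' : ∀ ρ, deriv (deriv θ₀) ρ = deriv f (θ₀ ρ) := fun ρ => by linarith [hode ρ]
  -- Step 1: find a < 1 with deriv f x ≤ α'^2 * (x-1) on (a,1)
  have hd : HasDerivAt (deriv f) (iteratedDeriv 2 f 1) 1 := by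
    have := (hf'c.differentiable (by simp) 1).hasDerivAt
    rwa [show deriv (deriv f) 1 = iteratedDeriv 2 f 1 by
      simp [iteratedDeriv_succ, iteratedDeriv_one]] at this
  have hslope := hasDerivAt_iff_tendsto_slope.mp hd
  have hev : ∀ᶠ x in 𝓝[≠] (1:ℝ), α' ^ 2 < slope (deriv f) 1 x :=
    hslope.eventually (eventually_gt_nhds hA)
  have hev' : ∀ᶠ x in 𝓝[<] (1:ℝ), α' ^ 2 < slope (deriv f) 1 x :=
    hev.filter_mono (nhdsWithin_mono 1 (fun x hx => ne_of_lt hx))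
  obtain ⟨a, ha, hsub⟩ :=
    (mem_nhdsLT_iff_exists_Ioo_subset' (show (0:ℝ) < 1 by norm_num)).mp hev'
  have hkey : ∀ x : ℝ, a < x → x < 1 → deriv f x ≤ α' ^ 2 * (x - 1) := by
    intro x hax hx1
    have hs : α' ^ 2 < slope (deriv f) 1 x := hsub ⟨hax, hx1⟩
    rw [slope_def_field] at hs
    have hx1' : x - 1 < 0 := by linarith
    rw [hf'1, sub_zero] at hs
    have := (lt_div_iff_of_neg hx1').mp hs
    linarith
  -- Step 2: find R ≥ 0 with a < θ₀ ρ for ρ ≥ R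
  obtain ⟨R₀, hR₀⟩ := eventually_atTop.mp (htop.eventually (eventually_gt_nhds (mem_Iio.mp ha)))
  set R : ℝ := max R₀ 0 with hRdef
  have hR0 : (0:ℝ) ≤ R := le_max_right _ _
  have hkeyρ : ∀ ρ : ℝ, R ≤ ρ → α' ^ 2 * (1 - θ₀ ρ) ≤ -(deriv f (θ₀ ρ)) := by
    intro ρ hρ
    have h1 := hkey (θ₀ ρ) (hR₀ ρ (le_trans (le_max_left _ _) hρ)) (hrange ρ).2
    linarith
  -- h = exp(-α'ρ)·(-θ₀' + α'(1-θ₀)) is monotone on [R, ∞)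
  have hg : ∀ ρ : ℝ, HasDerivAt (fun ρ => -(deriv θ₀ ρ) + α' * (1 - θ₀ ρ))
      (-(deriv (deriv θ₀) ρ) + α' * (-(deriv θ₀ ρ))) ρ := by
    intro ρ
    exact ((hθ'd ρ).hasDerivAt.neg).add (((hθ1 ρ).hasDerivAt.const_sub 1).const_mul α')
  have hh : ∀ ρ : ℝ, HasDerivAt
      (fun ρ => Real.exp (-α' * ρ) * (-(deriv θ₀ ρ) + α' * (1 - θ₀ ρ)))
      (Real.exp (-α' * ρ) * (-α') * (-(deriv θ₀ ρ) + α' * (1 - θ₀ ρ)) +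
        Real.exp (-α' * ρ) * (-(deriv (deriv θ₀) ρ) + α' * (-(deriv θ₀ ρ)))) ρ :=
    fun ρ => (expMulDeriv (-α') ρ).mul (hg ρ)
  have hhmono : MonotoneOn
      (fun ρ => Real.exp (-α' * ρ) * (-(deriv θ₀ ρ) + α' * (1 - θ₀ ρ))) (Set.Ici R) := by
    apply monotoneOn_of_deriv_nonneg (convex_Ici R)
    · exact Continuous.continuousOn (by fun_prop)
    · exact fun ρ _ => ((hh ρ).differentiableAt).differentiableWithinAt
    · intro ρ hρ
      rw [interior_Ici] at hρ
      rw [(hh ρ).deriv, hode' ρ]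
      have h1 := hkeyρ ρ hρ.le
      have h3 := Real.exp_pos (-α' * ρ)
      nlinarith [mul_le_mul_of_nonneg_left h1 h3.le]
  -- g ≤ 0 on [R, ∞)
  have hgle : ∀ ρ₀ : ℝ, R ≤ ρ₀ → -(deriv θ₀ ρ₀) + α' * (1 - θ₀ ρ₀) ≤ 0 := by
    intro ρ₀ hρ₀
    by_contra hpos
    push_neg at hpos
    set c : ℝ := Real.exp (-α' * ρ₀) * (-(deriv θ₀ ρ₀) + α' * (1 - θ₀ ρ₀)) with hcdef
    have hc : 0 < c := mul_pos (Real.exp_pos _) hpos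
    have hgc : ∀ ρ, ρ₀ ≤ ρ → c * Real.exp (α' * ρ) ≤ -(deriv θ₀ ρ) + α' * (1 - θ₀ ρ) := by
      intro ρ hρ
      have hmono := hhmono (Set.mem_Ici.mpr hρ₀) (Set.mem_Ici.mpr (le_trans hρ₀ hρ)) hρ
      simp only at hmono
      calc c * Real.exp (α' * ρ)
          ≤ (Real.exp (-α' * ρ) * (-(deriv θ₀ ρ) + α' * (1 - θ₀ ρ))) * Real.exp (α' * ρ) :=
            mul_le_mul_of_nonneg_right hmono (Real.exp_pos _).le
        _ = (Real.exp (-α' * ρ) * Real.exp (α' * ρ)) * (-(deriv θ₀ ρ) + α' * (1 - θ₀ ρ)) := by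
            ring
        _ = -(deriv θ₀ ρ) + α' * (1 - θ₀ ρ) := by rw [expMulInv]; ring
    set K : ℝ := c / (2 * α') * Real.exp (2 * α' * ρ₀) with hKdef
    have haa : 0 < c / (2 * α') := div_pos hc (by linarith)
    have hK : 0 < K := mul_pos haa (Real.exp_pos _)
    have hG : ∀ ρ : ℝ, HasDerivAt
        (fun ρ => Real.exp (α' * ρ) * (1 - θ₀ ρ) - c / (2 * α') * Real.exp (2 * α' * ρ))
        (Real.exp (α' * ρ) * α' * (1 - θ₀ ρ) + Real.exp (α' * ρ) * (-(deriv θ₀ ρ))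
          - c / (2 * α') * (Real.exp (2 * α' * ρ) * (2 * α'))) ρ := by
      intro ρ
      exact ((expMulDeriv α' ρ).mul ((hθ1 ρ).hasDerivAt.const_sub 1)).sub
        ((expMulDeriv (2 * α') ρ).const_mul _)
    have hGmono : MonotoneOn
        (fun ρ => Real.exp (α' * ρ) * (1 - θ₀ ρ) - c / (2 * α') * Real.exp (2 * α' * ρ))
        (Set.Ici ρ₀) := by
      apply monotoneOn_of_deriv_nonneg (convex_Ici ρ₀)
      · exact Continuous.continuousOn (by fun_prop)
      · exact fun ρ _ => ((hG ρ).differentiableAt).differentiableWithinAt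
      · intro ρ hρ
        rw [interior_Ici] at hρ
        rw [(hG ρ).deriv]
        have h1 := hgc ρ hρ.le
        have hexp2 : Real.exp (α' * ρ) * Real.exp (α' * ρ) = Real.exp (2 * α' * ρ) := by
          rw [← Real.exp_add]; ring_nf
        have hdiv : c / (2 * α') * (Real.exp (2 * α' * ρ) * (2 * α')) =
            c * Real.exp (2 * α' * ρ) := by field_simp
        nlinarith [mul_le_mul_of_nonneg_left h1 (Real.exp_pos (α' * ρ)).le]
    -- contradiction for large ρ
    set M : ℝ := max 2 ((2 + K) / (c / (2 * α'))) with hMdef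
    have hM2 : (2:ℝ) ≤ M := le_max_left _ _
    have hMpos : (0:ℝ) < M := by linarith
    set ρ : ℝ := max ρ₀ (Real.log M / α') with hρdef
    have hρρ₀ : ρ₀ ≤ ρ := le_max_left _ _
    have hEM : M ≤ Real.exp (α' * ρ) := by
      have hlog : Real.log M ≤ α' * ρ := by
        rw [hρdef]
        calc Real.log M = α' * (Real.log M / α') := by field_simp
          _ ≤ α' * max ρ₀ (Real.log M / α') :=
              mul_le_mul_of_nonneg_left (le_max_right _ _) hα'pos.le
      calc M = Real.exp (Real.log M) := (Real.exp_log hMpos).symm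
        _ ≤ Real.exp (α' * ρ) := Real.exp_le_exp.mpr hlog
    have hGin := hGmono (Set.mem_Ici.mpr le_rfl) (Set.mem_Ici.mpr hρρ₀) hρρ₀
    simp only at hGin
    have hE := Real.exp_pos (α' * ρ)
    have hE2 : (2:ℝ) ≤ Real.exp (α' * ρ) := le_trans hM2 hEM
    have hFρ : Real.exp (α' * ρ) * (1 - θ₀ ρ) ≤ 2 * Real.exp (α' * ρ) := by
      nlinarith [(hrange ρ).1]
    have hFρ₀ : 0 ≤ Real.exp (α' * ρ₀) * (1 - θ₀ ρ₀) := by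
      nlinarith [(hrange ρ₀).2, Real.exp_pos (α' * ρ₀)]
    have hexp2 : Real.exp (α' * ρ) * Real.exp (α' * ρ) = Real.exp (2 * α' * ρ) := by
      rw [← Real.exp_add]; ring_nf
    have hMbound : 2 + K ≤ c / (2 * α') * M := by
      calc 2 + K = c / (2 * α') * ((2 + K) / (c / (2 * α'))) := by field_simp
        _ ≤ c / (2 * α') * M := mul_le_mul_of_nonneg_left (le_max_right _ _) haa.le
    -- combine: (c/2α') E² ≤ 2E + K while (2+K) E ≤ (c/2α') M E ≤ (c/2α') E²
    nlinarith [mul_le_mul_of_nonneg_right hMbound hE.le,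
      mul_le_mul_of_nonneg_right hEM (mul_nonneg haa.le hE.le), hexp2, hK, hE2]
  -- F = exp(α'ρ)(1-θ₀ρ) is antitone on [R,∞)
  have hF : ∀ ρ : ℝ, HasDerivAt (fun ρ => Real.exp (α' * ρ) * (1 - θ₀ ρ))
      (Real.exp (α' * ρ) * α' * (1 - θ₀ ρ) + Real.exp (α' * ρ) * (-(deriv θ₀ ρ))) ρ :=
    fun ρ => (expMulDeriv α' ρ).mul ((hθ1 ρ).hasDerivAt.const_sub 1)
  have hFanti : AntitoneOn (fun ρ => Real.exp (α' * ρ) * (1 - θ₀ ρ)) (Set.Ici R) := by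
    apply antitoneOn_of_deriv_nonpos (convex_Ici R)
    · exact Continuous.continuousOn (by fun_prop)
    · exact fun ρ _ => ((hF ρ).differentiableAt).differentiableWithinAt
    · intro ρ hρ
      rw [interior_Ici] at hρ
      rw [(hF ρ).deriv]
      have h1 := hgle ρ hρ.le
      nlinarith [mul_le_mul_of_nonneg_left h1 (Real.exp_pos (α' * ρ)).le]
  -- conclusion
  refine ⟨2 * Real.exp (α' * R), by positivity, ?_⟩
  intro ρ hρ
  have hub := (hrange ρ).2
  have hlb := (hrange ρ).1
  have habs : |θ₀ ρ - 1| = 1 - θ₀ ρ := by rw [abs_of_nonpos (by linarith)]; ring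
  rw [habs]
  have h3 := expMulInv α' ρ
  rcases le_or_gt ρ R with hcase | hcase
  · have h2 : Real.exp (α' * ρ) ≤ Real.exp (α' * R) :=
      Real.exp_le_exp.mpr (mul_le_mul_of_nonneg_left hcase hα'pos.le)
    nlinarith [Real.exp_pos (-α' * ρ), Real.exp_pos (α' * ρ)]
  · have h1 := hFanti (Set.mem_Ici.mpr le_rfl) (Set.mem_Ici.mpr hcase.le) hcase.le
    simp only at h1
    have h2 : Real.exp (α' * R) * (1 - θ₀ R) ≤ 2 * Real.exp (α' * R) := by
      nlinarith [(hrange R).1, Real.exp_pos (α' * R)]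
    have hE := Real.exp_pos (-α' * ρ)
    nlinarith [mul_le_mul_of_nonneg_left (le_trans h1 h2) hE.le]

/-- Exponential decay of the optimal profile towards ±1. -/
theorem stmt_1 (f θ₀ : ℝ → ℝ)
    (hf : ContDiff ℝ (⊤ : ℕ∞) f)
    (hf'1 : deriv f 1 = 0) (hf'm1 : deriv f (-1) = 0)
    (hf''1 : 0 < iteratedDeriv 2 f 1) (hf''m1 : 0 < iteratedDeriv 2 f (-1))
    (hθ : ContDiff ℝ 2 θ₀)
    (hode : ∀ ρ, -(deriv (deriv θ₀) ρ) + deriv f (θ₀ ρ) = 0)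
    (htop : Filter.Tendsto θ₀ Filter.atTop (nhds 1))
    (hbot : Filter.Tendsto θ₀ Filter.atBot (nhds (-1)))
    (hrange : ∀ ρ, θ₀ ρ ∈ Set.Ioo (-1 : ℝ) 1)
    (α' : ℝ) (hα'pos : 0 < α')
    (hα'lt : α' < min (Real.sqrt (iteratedDeriv 2 f (-1))) (Real.sqrt (iteratedDeriv 2 f 1))) :
    ∃ C > 0, (∀ ρ : ℝ, 0 ≤ ρ → |θ₀ ρ - 1| ≤ C * Real.exp (-α' * ρ)) ∧
      (∀ ρ : ℝ, ρ ≤ 0 → |θ₀ ρ + 1| ≤ C * Real.exp (α' * ρ)) := by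
  have hA1 : α' ^ 2 < iteratedDeriv 2 f 1 := by
    have h1 : α' < Real.sqrt (iteratedDeriv 2 f 1) := lt_of_lt_of_le hα'lt (min_le_right _ _)
    nlinarith [Real.sq_sqrt hf''1.le, Real.sqrt_nonneg (iteratedDeriv 2 f 1)]
  have hAm1 : α' ^ 2 < iteratedDeriv 2 f (-1) := by
    have h1 : α' < Real.sqrt (iteratedDeriv 2 f (-1)) := lt_of_lt_of_le hα'lt (min_le_left _ _)
    nlinarith [Real.sq_sqrt hf''m1.le, Real.sqrt_nonneg (iteratedDeriv 2 f (-1))]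
  -- right decay
  obtain ⟨C₁, hC₁, hright⟩ := right_decay f θ₀ hf hf'1 hθ hode htop hrange α' hα'pos hA1
  -- reflected data
  have hθ1 : Differentiable ℝ θ₀ := hθ.differentiable (by norm_num)
  obtain ⟨C₂, hC₂, hleft⟩ := right_decay (fun x => f (-x)) (fun ρ => -θ₀ (-ρ))
    (hf.comp contDiff_id.neg)
    (by rw [deriv_comp_neg]; simp [hf'm1])
    ((hθ.comp contDiff_id.neg).neg)
    (by
      intro ρ
      show -(deriv (deriv fun ρ : ℝ => -θ₀ (-ρ)) ρ) +
        deriv (fun x => f (-x)) (-θ₀ (-ρ)) = 0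
      have hd1 : (deriv fun ρ : ℝ => -θ₀ (-ρ)) = fun σ : ℝ => deriv θ₀ (-σ) := by
        funext σ
        have h := deriv_comp_neg (f := fun x : ℝ => -θ₀ x) (x := σ)
        simpa using h
      rw [hd1]
      have hd2 : deriv (fun σ : ℝ => deriv θ₀ (-σ)) ρ = -(deriv (deriv θ₀) (-ρ)) :=
        deriv_comp_neg (f := deriv θ₀) (x := ρ)
      have hd3 : deriv (fun x => f (-x)) (-θ₀ (-ρ)) = -(deriv f (θ₀ (-ρ))) := by
        have h := deriv_comp_neg (f := f) (x := -θ₀ (-ρ))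
        simpa using h
      rw [hd2, hd3]
      have := hode (-ρ)
      linarith)
    (by
      have h1 : Filter.Tendsto (fun ρ : ℝ => θ₀ (-ρ)) Filter.atTop (nhds (-1)) :=
        hbot.comp tendsto_neg_atTop_atBot
      simpa using h1.neg)
    (by
      intro ρ
      obtain ⟨h1, h2⟩ := hrange (-ρ)
      exact ⟨by show (-1:ℝ) < -θ₀ (-ρ); linarith, by show -θ₀ (-ρ) < 1; linarith⟩)
    α' hα'pos
    (by rwa [iteratedDeriv_comp_neg, show ((-1:ℝ)) ^ 2 • iteratedDeriv 2 f (-1) =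
        iteratedDeriv 2 f (-1) by norm_num])
  refine ⟨max C₁ C₂, lt_of_lt_of_le hC₁ (le_max_left _ _), ?_, ?_⟩
  · intro ρ hρ
    exact le_trans (hright ρ hρ)
      (mul_le_mul_of_nonneg_right (le_max_left _ _) (Real.exp_pos _).le)
  · intro ρ hρ
    have h1 := hleft (-ρ) (by linarith)
    have h2 : |(-θ₀ (-(-ρ))) - 1| = |θ₀ ρ + 1| := by
      rw [neg_neg]
      rw [show -θ₀ ρ - 1 = -(θ₀ ρ + 1) by ring, abs_neg]
    rw [h2] at h1
    have h3 : -α' * -ρ = α' * ρ := by ring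
    rw [h3] at h1
    exact le_trans h1 (mul_le_mul_of_nonneg_right (le_max_right _ _) (Real.exp_pos _).le)
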